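/- Let Ṽ be the normalised Arctic lemming operator. For every initial point s = (x₁⁽⁰⁾,x₂⁽⁰⁾,x₃⁽⁰⁾,u⁽⁰⁾) ∈ S^{3,1}, the sequence Ṽ^k(s) converges as k → ∞, with limit (1/2, 0, 0, 1/2) if x₂⁽⁰⁾ = x₃⁽⁰⁾ = 0, and limit (7/20, 7/60, 7/60, 5/12) otherwise. -/

import Mathlib

/-!
After one step `x₂ = x₃`, and the image of a point `(x, y, y, u)` depends only on the ratio
`r = x / y`. On these points the operator acts on the ratio by the affine contraction
`r ↦ (6r + 3) / 7`, whose fixed point `r = 3` corresponds to `(7/20, 7/60, 7/60, 5/12)`.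
If `x₂ = x₃ = 0`, the first step already lands on the fixed point `(1/2, 0, 0, 1/2)`.
-/

/-- The normalised Arctic lemming gonosomal operator. -/
noncomputable def nArcticOp (p : ℝ × ℝ × ℝ × ℝ) : ℝ × ℝ × ℝ × ℝ :=
  ((6 * p.1 + 3 * p.2.1) / (12 * (p.1 + p.2.1 + p.2.2.1)),
   (3 * p.2.1 + 4 * p.2.2.1) / (12 * (p.1 + p.2.1 + p.2.2.1)),
   (3 * p.2.1 + 4 * p.2.2.1) / (12 * (p.1 + p.2.1 + p.2.2.1)),
   (6 * p.1 + 3 * p.2.1 + 4 * p.2.2.1) / (12 * (p.1 + p.2.1 + p.2.2.1)))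

/-- The set `S^{3,1}` of frequency distributions. -/
def S31 : Set (ℝ × ℝ × ℝ × ℝ) :=
  {p | 0 ≤ p.1 ∧ 0 ≤ p.2.1 ∧ 0 ≤ p.2.2.1 ∧ 0 ≤ p.2.2.2 ∧
       0 < p.1 + p.2.1 + p.2.2.1 ∧ 0 < p.2.2.2 ∧
       p.1 + p.2.1 + p.2.2.1 + p.2.2.2 = 1}

open Filter Topology

/-- The common image `nArcticOp (x, y, y, u)` of all points with `x / y = r`. -/
noncomputable def ratioPoint (r : ℝ) : ℝ × ℝ × ℝ × ℝ :=
  ((6 * r + 3) / (12 * (r + 2)), 7 / (12 * (r + 2)), 7 / (12 * (r + 2)),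
    (6 * r + 7) / (12 * (r + 2)))

lemma nArcticOp_eq_ratioPoint_div {x y : ℝ} (u : ℝ) (hy : y ≠ 0) (hxy : x + 2 * y ≠ 0) :
    nArcticOp (x, y, y, u) = ratioPoint (x / y) := by
  have hr : x / y + 2 ≠ 0 := by
    rw [show x / y + 2 = (x + 2 * y) / y by field_simp]
    exact div_ne_zero hxy hy
  simp only [nArcticOp, ratioPoint, Prod.mk.injEq]
  refine ⟨?_, ?_, ?_, ?_⟩ <;> field_simp <;> ring

lemma nArcticOp_ratioPoint {r : ℝ} (hr : -2 < r) :
    nArcticOp (ratioPoint r) = ratioPoint ((6 * r + 3) / 7) := by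
  have hr2 : 0 < r + 2 := by linarith
  have hsum : (6 * r + 3) / (12 * (r + 2)) + 2 * (7 / (12 * (r + 2))) =
      (6 * r + 17) / (12 * (r + 2)) := by
    field_simp
    ring
  rw [ratioPoint, nArcticOp_eq_ratioPoint_div _ (by positivity)
    (by rw [hsum]; exact div_ne_zero (by linarith) (by positivity))]
  congr 1
  field_simp

lemma iterate_nArcticOp_ratioPoint (k : ℕ) {r : ℝ} (hr : -2 < r) :
    nArcticOp^[k] (ratioPoint r) = ratioPoint (3 + (6 / 7) ^ k * (r - 3)) := by
  induction k generalizing r with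
  | zero => simp
  | succ k ih =>
    rw [Function.iterate_succ_apply, nArcticOp_ratioPoint hr, ih (by linarith)]
    congr 1
    ring

lemma continuousAt_ratioPoint {r : ℝ} (hr : r + 2 ≠ 0) : ContinuousAt ratioPoint r := by
  unfold ratioPoint
  fun_prop (disch := positivity)

lemma ratioPoint_three : ratioPoint 3 = (7 / 20, 7 / 60, 7 / 60, 5 / 12) := by
  norm_num [ratioPoint]

lemma tendsto_iterate_nArcticOp_ratioPoint {r : ℝ} (hr : -2 < r) :
    Tendsto (fun k => nArcticOp^[k] (ratioPoint r)) atTop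
      (𝓝 (7 / 20, 7 / 60, 7 / 60, 5 / 12)) := by
  have hratio : Tendsto (fun k : ℕ => 3 + (6 / 7 : ℝ) ^ k * (r - 3)) atTop (𝓝 3) := by
    simpa using ((tendsto_pow_atTop_nhds_zero_of_lt_one (by norm_num) (by norm_num)).mul_const
      (r - 3)).const_add (3 : ℝ)
  simp_rw [iterate_nArcticOp_ratioPoint _ hr, ← ratioPoint_three]
  exact (continuousAt_ratioPoint (by norm_num)).tendsto.comp hratio

lemma isFixedPt_nArcticOp_half : Function.IsFixedPt nArcticOp (1 / 2, 0, 0, 1 / 2) := by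
  norm_num [Function.IsFixedPt, nArcticOp]

lemma nArcticOp_apply_zero_zero {x : ℝ} (u : ℝ) (hx : x ≠ 0) :
    nArcticOp (x, 0, 0, u) = (1 / 2, 0, 0, 1 / 2) := by
  norm_num [nArcticOp]
  field_simp
  ring

lemma nArcticOp_nArcticOp_eq_ratioPoint {x₁ x₂ x₃ : ℝ} (u : ℝ) (hx₁ : 0 ≤ x₁) (hx₂ : 0 ≤ x₂)
    (hb : 0 < 3 * x₂ + 4 * x₃) :
    nArcticOp (nArcticOp (x₁, x₂, x₃, u)) =
      ratioPoint ((6 * x₁ + 3 * x₂) / (3 * x₂ + 4 * x₃)) := by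
  have hα : 0 < x₁ + x₂ + x₃ := by linarith
  rw [show nArcticOp (x₁, x₂, x₃, u) = (_, _, _, _) from rfl,
    nArcticOp_eq_ratioPoint_div _ (by positivity) (ne_of_gt (by positivity))]
  congr 1
  field_simp

theorem nArcticOp_limit (s : ℝ × ℝ × ℝ × ℝ) (hs : s ∈ S31) :
    (s.2.1 = 0 ∧ s.2.2.1 = 0 →
      Filter.Tendsto (fun k => nArcticOp^[k] s) Filter.atTop
        (nhds ((1 : ℝ) / 2, (0 : ℝ), (0 : ℝ), (1 : ℝ) / 2))) ∧
    (¬(s.2.1 = 0 ∧ s.2.2.1 = 0) →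
      Filter.Tendsto (fun k => nArcticOp^[k] s) Filter.atTop
        (nhds ((7 : ℝ) / 20, (7 : ℝ) / 60, (7 : ℝ) / 60, (5 : ℝ) / 12))) := by
  obtain ⟨x₁, x₂, x₃, u⟩ := s
  obtain ⟨hx₁, hx₂, hx₃, -, hα, -, -⟩ := hs
  dsimp only at hx₁ hx₂ hx₃ hα ⊢
  constructor
  · rintro ⟨rfl, rfl⟩
    refine (tendsto_add_atTop_iff_nat 1).mp (tendsto_const_nhds.congr fun k => ?_)
    rw [Function.iterate_succ_apply, nArcticOp_apply_zero_zero u (by linarith),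
      isFixedPt_nArcticOp_half.iterate k]
  · intro hx₂₃
    have hb : 0 < 3 * x₂ + 4 * x₃ := by
      by_contra! h
      exact hx₂₃ ⟨by linarith, by linarith⟩
    have htwo : nArcticOp^[2] (x₁, x₂, x₃, u) = _ :=
      nArcticOp_nArcticOp_eq_ratioPoint u hx₁ hx₂ hb
    refine (tendsto_add_atTop_iff_nat 2).mp ?_
    simp_rw [Function.iterate_add_apply, htwo]
    exact tendsto_iterate_nArcticOp_ratioPoint (by
      have : 0 ≤ (6 * x₁ + 3 * x₂) / (3 * x₂ + 4 * x₃) := by positivity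
      linarith)
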